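/- arXiv:1412.1748 — 2 statements merged into one kernel-verified Lean document; each statement's English description precedes it below -/
import Mathlib

section
/- A Hausdorff topological group G is metrizable if and only if G is a Fréchet–Urysohn ℵ-space. -/
open TopologicalSpace Filter Set

/-- A family `N` of subsets of a topological space `X` is a *k-network* if whenever `K ⊆ U`
with `K` compact and `U` open, there is a finite subfamily `F ⊆ N` with `K ⊆ ⋃₀ F ⊆ U`. -/
def IsKNetwork {X : Type*} [TopologicalSpace X] (N : Set (Set X)) : Prop :=
  ∀ K U : Set X, IsCompact K → IsOpen U → K ⊆ U →
    ∃ F : Set (Set X), F ⊆ N ∧ F.Finite ∧ K ⊆ ⋃₀ F ∧ ⋃₀ F ⊆ U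

/-- A family `N` of subsets of `X` is a *network* if for every `x` and every open `U ∋ x`
there is `A ∈ N` with `x ∈ A ⊆ U`. -/
def IsNetwork {X : Type*} [TopologicalSpace X] (N : Set (Set X)) : Prop :=
  ∀ (x : X) (U : Set X), IsOpen U → x ∈ U → ∃ A ∈ N, x ∈ A ∧ A ⊆ U

/-- A family of subsets is *locally finite* if every point has a neighbourhood meeting
only finitely many of its members. -/
def IsLocallyFiniteFamily {X : Type*} [TopologicalSpace X] (N : Set (Set X)) : Prop :=
  ∀ x : X, ∃ V ∈ nhds x, {A ∈ N | (A ∩ V).Nonempty}.Finite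

/-- A family of subsets is *σ-locally finite* if it is a countable union of locally finite
families. -/
def IsSigmaLocallyFinite {X : Type*} [TopologicalSpace X] (N : Set (Set X)) : Prop :=
  ∃ f : ℕ → Set (Set X), (∀ n, IsLocallyFiniteFamily (f n)) ∧ N = ⋃ n, f n

/-- An *ℵ-space* is a regular Hausdorff space with a σ-locally finite k-network. -/
def IsAlephSpace (X : Type*) [TopologicalSpace X] : Prop :=
  RegularSpace X ∧ T2Space X ∧ ∃ N : Set (Set X), IsSigmaLocallyFinite N ∧ IsKNetwork N

/-- An *ℵ₀-space* is a regular Hausdorff space with a countable k-network. -/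
def IsAleph0Space (X : Type*) [TopologicalSpace X] : Prop :=
  RegularSpace X ∧ T2Space X ∧ ∃ N : Set (Set X), N.Countable ∧ IsKNetwork N

open Topology Uniformity Metric

/-!
A metric space has a σ-locally finite k-network: for every `n`, take a locally finite open
refinement of the cover by balls of radius `1 / (n + 1)`.

Conversely, a Fréchet–Urysohn group is strongly Fréchet at `1` (Nyikos): given a decreasing
sequence `B k` with `1 ∈ closure (B k)`, pick `s k → 1` with `s k ≠ 1` and `y k n → 1` in `B k`;
then `1` lies in the closure of `{s k * y k n}`, and a sequence `s (k j) * y (k j) (n j)` tending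
to `1` must have `k j → ∞`, so `y (k j) (n j) → 1`. In a strongly Fréchet space, for open
`U ∋ x`, some finite union of members of a k-network lying in `U` and having `x` in their closure
is a neighbourhood of `x`: otherwise a sequence tending to `x` could eventually avoid each of
them. A σ-locally finite family has only countably many members with `x` in their closure, so
`𝓝 1` is countably generated and the group is metrizable.
-/

def IsStronglyFrechetAt {X : Type*} [TopologicalSpace X] (x : X) : Prop :=
  ∀ B : ℕ → Set X, Antitone B → (∀ k, x ∈ closure (B k)) →
    ∃ b : ℕ → X, (∀ k, b k ∈ B k) ∧ Tendsto b atTop (𝓝 x)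

section Networks

variable {X : Type*} [TopologicalSpace X] {N : Set (Set X)} {x : X}

theorem LocallyFinite.isLocallyFiniteFamily_range {ι : Type*} {f : ι → Set X}
    (hf : LocallyFinite f) : IsLocallyFiniteFamily (range f) := by
  intro x
  obtain ⟨V, hV, hfin⟩ := hf x
  refine ⟨V, hV, (hfin.image f).subset ?_⟩
  rintro _ ⟨⟨i, rfl⟩, hi⟩
  exact ⟨i, hi, rfl⟩

theorem IsLocallyFiniteFamily.finite_setOf_mem_closure (hN : IsLocallyFiniteFamily N) (x : X) :
    {A ∈ N | x ∈ closure A}.Finite := by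
  obtain ⟨V, hV, hfin⟩ := hN x
  refine hfin.subset fun A ⟨hA, hxA⟩ => ⟨hA, ?_⟩
  obtain ⟨y, hyV, hyA⟩ := mem_closure_iff_nhds.mp hxA V hV
  exact ⟨y, hyA, hyV⟩

theorem IsSigmaLocallyFinite.countable_setOf_mem_closure (hN : IsSigmaLocallyFinite N) (x : X) :
    {A ∈ N | x ∈ closure A}.Countable := by
  obtain ⟨f, hf, rfl⟩ := hN
  refine (countable_iUnion fun n => ((hf n).finite_setOf_mem_closure x).countable).mono ?_
  rintro A ⟨hA, hxA⟩
  obtain ⟨n, hn⟩ := mem_iUnion.mp hA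
  exact mem_iUnion.mpr ⟨n, hn, hxA⟩

theorem exists_tendsto_of_antitone_of_tendsto_atTop {B : ℕ → Set X} (hB : Antitone B)
    {z : ℕ → X} {k : ℕ → ℕ} (hzB : ∀ j, z j ∈ B (k j)) (hk : Tendsto k atTop atTop)
    (hz : Tendsto z atTop (𝓝 x)) : ∃ b : ℕ → X, (∀ m, b m ∈ B m) ∧ Tendsto b atTop (𝓝 x) := by
  obtain ⟨φ, hφ, hkφ⟩ := extraction_forall_of_eventually fun m => tendsto_atTop.mp hk m
  exact ⟨z ∘ φ, fun m => hB (hkφ m) (hzB (φ m)), hz.comp hφ.tendsto_atTop⟩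

/-- A k-network is a cs*-network. -/
theorem IsKNetwork.exists_frequently_mem (hN : IsKNetwork N) {u : ℕ → X}
    (hu : Tendsto u atTop (𝓝 x)) {U : Set X} (hU : IsOpen U) (hxU : x ∈ U) :
    ∃ A ∈ N, A ⊆ U ∧ x ∈ closure A ∧ ∃ᶠ n in atTop, u n ∈ A := by
  obtain ⟨M, hM⟩ := eventually_atTop.mp (hu.eventually_mem (hU.mem_nhds hxU))
  have hv : Tendsto (fun n => u (n + M)) atTop (𝓝 x) := hu.comp (tendsto_add_atTop_nat M)
  have hvU : insert x (range fun n => u (n + M)) ⊆ U := by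
    rintro y (rfl | ⟨n, rfl⟩)
    exacts [hxU, hM _ (Nat.le_add_left _ _)]
  obtain ⟨F, hFN, hF, hcover, hFU⟩ := hN _ U hv.isCompact_insert_range hU hvU
  obtain ⟨A, hAF, hA⟩ : ∃ A ∈ F, ∃ᶠ n in atTop, u (n + M) ∈ A := by
    by_contra! h
    obtain ⟨n, hn⟩ := (hF.eventually_all.mpr h).exists
    obtain ⟨A, hAF, hnA⟩ := hcover (mem_insert_of_mem _ ⟨n, rfl⟩)
    exact hn A hAF hnA
  have hu' : ∃ᶠ n in atTop, u n ∈ A := (tendsto_add_atTop_nat M).frequently hA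
  exact ⟨A, hFN hAF, fun y hy => hFU ⟨A, hAF, hy⟩,
    mem_closure_of_frequently_of_tendsto hu' hu, hu'⟩

theorem IsKNetwork.exists_accumulate_mem_nhds (hN : IsKNetwork N) (hx : IsStronglyFrechetAt x)
    {U : Set X} (hU : IsOpen U) (hxU : x ∈ U) {q : ℕ → Set X}
    (hq : {A ∈ N | A ⊆ U ∧ x ∈ closure A} ⊆ range q) : ∃ k, accumulate q k ∈ 𝓝 x := by
  by_contra! h
  have hcl (k : ℕ) : x ∈ closure (accumulate q k)ᶜ := by
    rw [closure_compl, mem_compl_iff, mem_interior_iff_mem_nhds]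
    exact h k
  obtain ⟨b, hbq, hb⟩ := hx _ (fun k l hkl => compl_subset_compl.mpr (monotone_accumulate hkl)) hcl
  obtain ⟨A, hAN, hAU, hxA, hbA⟩ := hN.exists_frequently_mem hb hU hxU
  obtain ⟨i, rfl⟩ := hq ⟨hAN, hAU, hxA⟩
  obtain ⟨m, him, hm⟩ := frequently_atTop.mp hbA i
  exact hbq m (mem_accumulate.mpr ⟨i, him, hm⟩)

theorem IsKNetwork.isCountablyGenerated_nhds (hN : IsKNetwork N) (hx : IsStronglyFrechetAt x)
    (hc : {A ∈ N | x ∈ closure A}.Countable) : (𝓝 x).IsCountablyGenerated := by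
  set P := {A ∈ N | x ∈ closure A}
  refine ⟨⟨{S ∈ sUnion '' {F | F.Finite ∧ F ⊆ P} | S ∈ 𝓝 x},
    ((countable_ofPred_finite_subset hc).image _).mono (sep_subset _ _),
    le_antisymm (le_generate_iff.mpr fun S hS => hS.2) fun U hU => ?_⟩⟩
  have hxU : x ∈ interior U := mem_interior_iff_mem_nhds.mpr hU
  set Q := {A ∈ N | A ⊆ interior U ∧ x ∈ closure A}
  have hQ : Q.Nonempty := by
    obtain ⟨A, hAN, hAU, hxA, -⟩ :=
      hN.exists_frequently_mem (tendsto_const_nhds (x := x)) isOpen_interior hxU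
    exact ⟨A, hAN, hAU, hxA⟩
  have hQc : Q.Countable := hc.mono (fun A hA => ⟨hA.1, hA.2.2⟩ : Q ⊆ P)
  obtain ⟨q, hq⟩ := hQc.exists_eq_range hQ
  have hqQ (i : ℕ) : q i ∈ Q := hq ▸ mem_range_self i
  obtain ⟨k, hk⟩ := hN.exists_accumulate_mem_nhds hx isOpen_interior hxU hq.subset
  have hacc : ⋃₀ (q '' Iic k) = accumulate q k := by
    rw [sUnion_image]
    rfl
  refine mem_of_superset (mem_generate_of_mem ⟨⟨q '' Iic k, ⟨(finite_Iic k).image q, ?_⟩, hacc⟩,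
    hk⟩) ?_
  · rintro _ ⟨i, -, rfl⟩
    exact ⟨(hqQ i).1, (hqQ i).2.2⟩
  · intro y hy
    obtain ⟨i, -, hy⟩ := mem_accumulate.mp hy
    exact interior_subset ((hqQ i).2.1 hy)

end Networks

theorem Metric.exists_isSigmaLocallyFinite_isKNetwork (X : Type*) [PseudoMetricSpace X] :
    ∃ N : Set (Set X), IsSigmaLocallyFinite N ∧ IsKNetwork N := by
  have hcov (n : ℕ) : ∃ V : X → Set X, ⋃ a, V a = univ ∧ LocallyFinite V ∧
      ∀ a, V a ⊆ ball a (1 / (n + 1)) := by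
    have hr : (0 : ℝ) < 1 / (n + 1) := by positivity
    obtain ⟨V, -, hV⟩ := precise_refinement (fun a : X => ball a (1 / (n + 1)))
      (fun _ => isOpen_ball) (iUnion_eq_univ_iff.mpr fun x => ⟨x, mem_ball_self hr⟩)
    exact ⟨V, hV⟩
  choose V hVcov hVlf hVball using hcov
  refine ⟨⋃ n, range (V n), ⟨_, fun n => (hVlf n).isLocallyFiniteFamily_range, rfl⟩, ?_⟩
  intro K U hK hU hKU
  obtain ⟨δ, hδ, hKδU⟩ := hK.exists_thickening_subset_open hU hKU
  obtain ⟨n, hn⟩ := exists_nat_one_div_lt (half_pos hδ)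
  refine ⟨V n '' {a | (V n a ∩ K).Nonempty}, ?_,
    ((hVlf n).finite_nonempty_inter_compact hK).image _, ?_, ?_⟩
  · rintro _ ⟨a, -, rfl⟩
    exact mem_iUnion.mpr ⟨n, a, rfl⟩
  · intro x hx
    obtain ⟨a, ha⟩ := mem_iUnion.mp (hVcov n ▸ mem_univ x)
    exact ⟨V n a, ⟨a, ⟨x, ha, hx⟩, rfl⟩, ha⟩
  · rintro x ⟨_, ⟨a, ⟨z, hza, hzK⟩, rfl⟩, hxa⟩
    refine hKδU (mem_thickening_iff.mpr ⟨z, hzK, ?_⟩)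
    have hxa' := mem_ball.mp (hVball n a hxa)
    have hza' := mem_ball.mp (hVball n a hza)
    calc dist x z ≤ dist x a + dist z a := dist_triangle_right _ _ _
      _ < δ := by linarith

section Group

variable {G : Type*} [Group G] [TopologicalSpace G] [IsTopologicalGroup G]

theorem IsTopologicalGroup.exists_tendsto_one_of_antitone [T2Space G] [FrechetUrysohnSpace G]
    {s : ℕ → G} (hs1 : ∀ k, s k ≠ 1) (hs : Tendsto s atTop (𝓝 1)) {B : ℕ → Set G}
    (hB : Antitone B) (hB1 : ∀ k, (1 : G) ∈ closure (B k)) :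
    ∃ b : ℕ → G, (∀ k, b k ∈ B k) ∧ Tendsto b atTop (𝓝 1) := by
  have hy (k : ℕ) : ∃ y : ℕ → G, (∀ n, y n ∈ B k ∩ {(s k)⁻¹}ᶜ) ∧ Tendsto y atTop (𝓝 1) :=
    mem_closure_iff_seq_limit.mp <| isOpen_compl_singleton.closure_inter
      ⟨hB1 k, (inv_ne_one.mpr (hs1 k)).symm⟩
  choose y hyB hy using hy
  set A := ⋃ k, range fun n => s k * y k n
  have hsA (k : ℕ) : s k ∈ closure A :=
    mem_closure_of_tendsto (by simpa using (hy k).const_mul (s k))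
      (Eventually.of_forall fun n => mem_iUnion.mpr ⟨k, n, rfl⟩)
  obtain ⟨a, haA, ha⟩ := mem_closure_iff_seq_limit.mp
    (closure_closure (s := A) ▸ mem_closure_of_tendsto hs (Eventually.of_forall hsA))
  simp only [A, mem_iUnion, mem_range] at haA
  choose k n hkn using haA
  -- `s K * insert 1 (range (y K))` is a closed set avoiding `1`, so `k` has finite fibres.
  have hk : Tendsto k atTop atTop := by
    rw [← Nat.cofinite_eq_atTop]
    refine Tendsto.cofinite_of_finite_preimage_singleton fun K => ?_
    set C := (s K * ·) '' insert 1 (range (y K))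
    have hC : IsClosed C :=
      ((hy K).isCompact_insert_range.image (continuous_const_mul _)).isClosed
    have h1C : (1 : G) ∉ C := by
      rintro ⟨g, rfl | ⟨m, rfl⟩, hg⟩
      · exact hs1 K (by simpa using hg)
      · exact (hyB K m).2 (eq_inv_of_mul_eq_one_right hg)
    have haC : ∀ᶠ j in cofinite, a j ∉ C :=
      Nat.cofinite_eq_atTop ▸ ha.eventually_mem (hC.isOpen_compl.mem_nhds h1C)
    refine (eventually_cofinite.mp haC).subset fun j (hj : k j = K) => not_not.mpr ?_
    exact ⟨y K (n j), mem_insert_of_mem _ ⟨n j, rfl⟩, hj ▸ hkn j⟩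
  have hz : Tendsto (fun j => (s (k j))⁻¹ * a j) atTop (𝓝 1) := by
    simpa using (hs.comp hk).inv.mul ha
  refine exists_tendsto_of_antitone_of_tendsto_atTop hB (fun j => ?_) hk hz
  rw [← hkn j, inv_mul_cancel_left]
  exact (hyB _ _).1

theorem IsTopologicalGroup.isStronglyFrechetAt_one [T2Space G] [FrechetUrysohnSpace G] :
    IsStronglyFrechetAt (1 : G) := by
  intro B hB hB1
  by_cases h : (1 : G) ∈ closure {1}ᶜ
  · obtain ⟨s, hs1, hs⟩ := mem_closure_iff_seq_limit.mp h
    exact exists_tendsto_one_of_antitone hs1 hs hB hB1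
  · rw [closure_compl, mem_compl_iff, not_not, mem_interior_iff_mem_nhds] at h
    refine ⟨fun _ => 1, fun k => ?_, tendsto_const_nhds⟩
    obtain ⟨g, hg1, hgB⟩ := mem_closure_iff_nhds.mp (hB1 k) _ h
    rwa [mem_singleton_iff.mp hg1] at hgB

theorem IsTopologicalGroup.metrizableSpace [T0Space G] [(𝓝 (1 : G)).IsCountablyGenerated] :
    MetrizableSpace G := by
  let := IsTopologicalGroup.rightUniformSpace G
  have : (𝓤 G).IsCountablyGenerated := Filter.comap.isCountablyGenerated _ _
  exact UniformSpace.metrizableSpace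

end Group

theorem topologicalGroup_metrizable_iff_frechetUrysohn_aleph_general
    (G : Type*) [Group G] [TopologicalSpace G] [IsTopologicalGroup G] :
    TopologicalSpace.MetrizableSpace G ↔ (FrechetUrysohnSpace G ∧ IsAlephSpace G) := by
  constructor
  · intro _
    let := TopologicalSpace.pseudoMetrizableSpacePseudoMetric G
    exact ⟨inferInstance, inferInstance, inferInstance,
      Metric.exists_isSigmaLocallyFinite_isKNetwork G⟩
  · rintro ⟨_, -, _, N, hNσ, hN⟩
    have : (𝓝 (1 : G)).IsCountablyGenerated :=
      hN.isCountablyGenerated_nhds IsTopologicalGroup.isStronglyFrechetAt_one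
        (hNσ.countable_setOf_mem_closure 1)
    exact IsTopologicalGroup.metrizableSpace

/-- A Hausdorff topological group is metrizable iff it is a Fréchet–Urysohn ℵ-space. -/
theorem topologicalGroup_metrizable_iff_frechetUrysohn_aleph
    (G : Type*) [Group G] [TopologicalSpace G] [IsTopologicalGroup G] [T2Space G] :
    TopologicalSpace.MetrizableSpace G ↔ (FrechetUrysohnSpace G ∧ IsAlephSpace G) :=
  topologicalGroup_metrizable_iff_frechetUrysohn_aleph_general G
end

section
/- Let E be a reflexive real Banach space (i.e., the canonical embedding of E into its double dual E′′ is surjective). Then the following are equivalent: (i) E endowed with its weak topology is an ℵ-space; (ii) E endowed with its weak topology is an ℵ₀-space; (iii) E is separable. -/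
open TopologicalSpace Filter Set

/-!
Closed balls of a reflexive space are weakly compact (Banach–Alaoglu in `E'' = E`), so the weak
topology is σ-compact, and there a locally finite family has only countably many nonempty
members: ℵ and ℵ₀ coincide. A countable k-network is a countable network, so the weak topology is
separable, and then so is the norm topology by Mazur. Conversely, if `E` is separable then so is
`E'` (because `E'' = E` is), so weakly compact sets of `E` are metrizable. Every weakly compact
set is bounded (Banach–Steinhaus), hence lies in a ball, and countable bases of the balls make a
countable k-network.
-/

open Topology Metric NormedSpace

section Networks

variable {X : Type*} [TopologicalSpace X]

theorem IsLocallyFiniteFamily.mono {N N' : Set (Set X)} (hN : IsLocallyFiniteFamily N)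
    (h : N' ⊆ N) : IsLocallyFiniteFamily N' := fun x => by
  obtain ⟨V, hV, hfin⟩ := hN x
  exact ⟨V, hV, hfin.subset fun A hA => ⟨h hA.1, hA.2⟩⟩

theorem IsLocallyFiniteFamily.locallyFinite {N : Set (Set X)} (hN : IsLocallyFiniteFamily N) :
    LocallyFinite fun A : N => (A : Set X) := fun x => by
  obtain ⟨V, hV, hfin⟩ := hN x
  exact ⟨V, hV, (hfin.preimage Subtype.val_injective.injOn).subset fun A hA => ⟨A.2, hA⟩⟩

theorem IsLocallyFiniteFamily.countable_nonempty [SigmaCompactSpace X] {N : Set (Set X)}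
    (hN : IsLocallyFiniteFamily N) : {A ∈ N | A.Nonempty}.Countable :=
  countable_coe_iff.1 <| countable_univ_iff.1 <|
    (hN.mono (sep_subset _ _)).locallyFinite.countable_univ fun A => A.2.2

theorem IsSigmaLocallyFinite.countable [SigmaCompactSpace X] {N : Set (Set X)}
    (hN : IsSigmaLocallyFinite N) : N.Countable := by
  obtain ⟨f, hf, rfl⟩ := hN
  refine ((countable_iUnion fun n => (hf n).countable_nonempty).insert ∅).mono fun A hA => ?_
  rcases A.eq_empty_or_nonempty with rfl | hne
  · exact mem_insert _ _
  · obtain ⟨n, hn⟩ := mem_iUnion.1 hA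
    exact mem_insert_of_mem _ (mem_iUnion.2 ⟨n, hn, hne⟩)

theorem Set.Finite.isLocallyFiniteFamily {N : Set (Set X)} (hN : N.Finite) :
    IsLocallyFiniteFamily N :=
  fun _ => ⟨univ, univ_mem, hN.subset (sep_subset _ _)⟩

theorem Set.Countable.isSigmaLocallyFinite {N : Set (Set X)} (hN : N.Countable) :
    IsSigmaLocallyFinite N := by
  obtain ⟨g, hg⟩ := (hN.insert ∅).exists_eq_range (insert_nonempty _ _)
  refine ⟨fun n => {g n} ∩ N,
    fun n => ((finite_singleton _).inter_of_left _).isLocallyFiniteFamily, ?_⟩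
  ext A
  simp only [mem_iUnion, mem_inter_iff, mem_singleton_iff, exists_and_right, iff_and_self]
  intro hA
  exact (hg ▸ mem_insert_of_mem ∅ hA : A ∈ range g).imp fun _ => Eq.symm

theorem isAlephSpace_iff_isAleph0Space [SigmaCompactSpace X] :
    IsAlephSpace X ↔ IsAleph0Space X :=
  ⟨fun ⟨hr, ht, N, hN, hk⟩ => ⟨hr, ht, N, hN.countable, hk⟩,
    fun ⟨hr, ht, N, hN, hk⟩ => ⟨hr, ht, N, hN.isSigmaLocallyFinite, hk⟩⟩

theorem IsKNetwork.isNetwork {N : Set (Set X)} (hN : IsKNetwork N) : IsNetwork N := by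
  intro x U hU hx
  obtain ⟨F, hFN, -, hxF, hFU⟩ := hN {x} U isCompact_singleton hU (singleton_subset_iff.2 hx)
  obtain ⟨A, hAF, hxA⟩ := hxF rfl
  exact ⟨A, hFN hAF, hxA, (subset_sUnion_of_mem hAF).trans hFU⟩

theorem IsNetwork.separableSpace {N : Set (Set X)} (hN : IsNetwork N) (hc : N.Countable) :
    SeparableSpace X := by
  have : Countable {A ∈ N | A.Nonempty} := (hc.mono (sep_subset _ _)).to_subtype
  refine ⟨⟨range fun A : {A ∈ N | A.Nonempty} => A.2.2.some, countable_range _,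
    dense_iff_inter_open.2 fun U hU ⟨x, hx⟩ => ?_⟩⟩
  obtain ⟨A, hA, hxA, hAU⟩ := hN x U hU hx
  exact ⟨_, hAU (Nonempty.some_mem ⟨x, hxA⟩), ⟨A, hA, x, hxA⟩, rfl⟩

theorem TopologicalSpace.IsTopologicalBasis.isKNetwork {B : Set (Set X)}
    (hB : IsTopologicalBasis B) : IsKNetwork B := by
  intro K U hK hU hKU
  have hcov : K ⊆ ⋃ V ∈ {V ∈ B | V ⊆ U}, V := fun x hx => by
    obtain ⟨V, hV, hxV, hVU⟩ := hB.exists_subset_of_mem_open (hKU hx) hU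
    exact mem_biUnion ⟨hV, hVU⟩ hxV
  obtain ⟨F, hFsub, hFfin, hKF⟩ :=
    hK.elim_finite_subcover_image (fun V hV => hB.isOpen hV.1) hcov
  exact ⟨F, fun V hV => (hFsub hV).1, hFfin, sUnion_eq_biUnion ▸ hKF,
    sUnion_subset fun V hV => (hFsub hV).2⟩

theorem isKNetwork_iUnion_image_val {ι : Type*} {B : ι → Set X} {N : ∀ i, Set (Set (B i))}
    (hN : ∀ i, IsKNetwork (N i)) (hB : ∀ K, IsCompact K → ∃ i, K ⊆ B i) :
    IsKNetwork (⋃ i, image Subtype.val '' N i) := by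
  intro K U hK hU hKU
  obtain ⟨i, hKi⟩ := hB K hK
  have hK' : IsCompact (Subtype.val ⁻¹' K : Set (B i)) := by
    rwa [IsEmbedding.subtypeVal.isCompact_iff, Subtype.image_preimage_coe,
      inter_eq_self_of_subset_right hKi]
  obtain ⟨F, hFN, hFfin, hKF, hFU⟩ :=
    hN i _ _ hK' (hU.preimage continuous_subtype_val) (preimage_mono hKU)
  refine ⟨image Subtype.val '' F, (image_mono hFN).trans (subset_iUnion_of_subset i le_rfl),
    hFfin.image _, fun x hx => ?_, ?_⟩
  · obtain ⟨A, hA, hxA⟩ := hKF (show (⟨x, hKi hx⟩ : B i) ∈ Subtype.val ⁻¹' K from hx)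
    exact ⟨_, mem_image_of_mem _ hA, mem_image_of_mem _ hxA⟩
  · rintro x ⟨_, ⟨A, hA, rfl⟩, y, hy, rfl⟩
    exact hFU ⟨A, hA, hy⟩

theorem exists_countable_isKNetwork_of_isCompact_subset {ι : Type*} [Countable ι]
    (B : ι → Set X) [∀ i, SecondCountableTopology (B i)]
    (hB : ∀ K, IsCompact K → ∃ i, K ⊆ B i) :
    ∃ N : Set (Set X), N.Countable ∧ IsKNetwork N :=
  ⟨_, countable_iUnion fun i => (countable_countableBasis (B i)).image _,
    isKNetwork_iUnion_image_val (fun i => (isBasis_countableBasis (B i)).isKNetwork) hB⟩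

end Networks

section Banach

variable {E : Type*} [NormedAddCommGroup E] [NormedSpace ℝ E]

theorem Submodule.exists_strongDual_eq_zero_ne_zero {S : Submodule ℝ E}
    (hS : IsClosed (S : Set E)) {x : E} (hx : x ∉ S) :
    ∃ f : StrongDual ℝ E, (∀ y ∈ S, f y = 0) ∧ f x ≠ 0 := by
  have : IsClosed (S : Set E) := hS
  obtain ⟨g, hg⟩ := SeparatingDual.exists_ne_zero (R := ℝ)
    (show Submodule.Quotient.mk (p := S) x ≠ 0 by simpa using hx)
  exact ⟨g.comp S.mkQL, fun y hy => by simp [(Submodule.Quotient.mk_eq_zero S).2 hy], hg⟩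

theorem separableSpace_of_separableSpace_strongDual [SeparableSpace (StrongDual ℝ E)] :
    SeparableSpace E := by
  set φ := denseSeq (StrongDual ℝ E)
  have hnorming : ∀ n, ∃ x : E, ‖x‖ ≤ 1 ∧ ‖φ n‖ / 2 ≤ ‖φ n x‖ := fun n => by
    rcases eq_or_ne (φ n) 0 with h | h
    · exact ⟨0, by simp, by simp [h]⟩
    · obtain ⟨x, hx1, hx2⟩ := (φ n).exists_lt_apply_of_lt_opNorm
        (half_lt_self (norm_pos_iff.2 h))
      exact ⟨x, hx1.le, hx2.le⟩
  choose x hx1 hx2 using hnorming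
  set T := Submodule.span ℝ (range x)
  suffices hT : ∀ y, y ∈ T.topologicalClosure by
    rw [← isSeparable_univ_iff]
    exact (countable_range x).isSeparable.span.closure.mono fun y _ => hT y
  intro y
  by_contra hy
  obtain ⟨f, hfT, hfy⟩ :=
    Submodule.exists_strongDual_eq_zero_ne_zero T.isClosed_topologicalClosure hy
  have hf : 0 < ‖f‖ := norm_pos_iff.2 fun h => hfy (by simp [h])
  obtain ⟨n, hn⟩ := (denseRange_denseSeq _).exists_dist_lt f (by positivity : 0 < ‖f‖ / 3)
  rw [dist_eq_norm] at hn
  -- `φ n` is close to `f`, which kills `x n`, yet `φ n` almost attains its norm at `x n`.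
  have hφx : ‖φ n (x n)‖ ≤ ‖f - φ n‖ := calc
    ‖φ n (x n)‖ = ‖(f - φ n) (x n)‖ := by
      simp [hfT _ (T.le_topologicalClosure (Submodule.subset_span ⟨n, rfl⟩))]
    _ ≤ ‖f - φ n‖ * ‖x n‖ := (f - φ n).le_opNorm _
    _ ≤ ‖f - φ n‖ := mul_le_of_le_one_right (norm_nonneg _) (hx1 n)
  linarith [norm_sub_norm_le f (φ n), hx2 n]

/-- By Mazur, the norm closure of the span of a weakly dense set is weakly closed, hence is
everything. -/
theorem separableSpace_of_separableSpace_weakSpace [SeparableSpace (WeakSpace ℝ E)] :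
    SeparableSpace E := by
  obtain ⟨D, hDc, hDd⟩ := exists_countable_dense (WeakSpace ℝ E)
  set s : Set E := (toWeakSpace ℝ E).symm '' D
  have hspan : toWeakSpace ℝ E '' closure (Submodule.span ℝ s) = univ := by
    rw [(Submodule.span ℝ s).convex.toWeakSpace_closure ℝ]
    refine eq_univ_of_univ_subset ?_
    rw [← hDd.closure_eq]
    refine closure_mono fun z hz => ?_
    exact ⟨_, Submodule.subset_span ⟨z, hz, rfl⟩, (toWeakSpace ℝ E).apply_symm_apply z⟩
  rw [← isSeparable_univ_iff]
  refine ((hDc.image (toWeakSpace ℝ E).symm).isSeparable.span (R := ℝ)).closure.mono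
    fun y _ => ?_
  exact (toWeakSpace ℝ E).injective.mem_set_image.1 (hspan ▸ mem_univ (toWeakSpace ℝ E y))

theorem isBounded_preimage_toWeakSpace {K : Set (WeakSpace ℝ E)} (hK : IsCompact K) :
    Bornology.IsBounded (toWeakSpace ℝ E ⁻¹' K) := by
  set g : K → StrongDual ℝ (StrongDual ℝ E) :=
    fun z => inclusionInDoubleDual ℝ E ((toWeakSpace ℝ E).symm z)
  have hpointwise : ∀ φ : StrongDual ℝ E, ∃ C, ∀ z, ‖g z φ‖ ≤ C := fun φ => by
    obtain ⟨C, hC⟩ := (hK.image (WeakBilin.eval_continuous (topDualPairing ℝ E).flip φ)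
      |>.isBounded).exists_norm_le
    exact ⟨C, fun z => hC _ ⟨z, z.2, rfl⟩⟩
  obtain ⟨C, hC⟩ := banach_steinhaus hpointwise
  refine isBounded_iff_forall_norm_le.2 ⟨C, fun x hx => ?_⟩
  rw [← (inclusionInDoubleDualLi ℝ (E := E)).norm_map x]
  exact hC ⟨toWeakSpace ℝ E x, hx⟩

theorem isCompact_toWeakSpace_closedBall
    (hrefl : Function.Surjective (inclusionInDoubleDual ℝ E)) (r : ℝ) :
    IsCompact (toWeakSpace ℝ E '' closedBall 0 r) := by
  have hclosed : IsClosed (toWeakSpace ℝ E '' closedBall 0 r) := by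
    rw [← closure_eq_iff_isClosed, ← (convex_closedBall 0 r).toWeakSpace_closure ℝ,
      isClosed_closedBall.closure_eq]
  have hsurj : Function.Surjective (inclusionInDoubleDualWeak ℝ E) := fun ψ => by
    obtain ⟨x, hx⟩ := hrefl (WeakDual.toStrongDual ψ)
    exact ⟨toWeakSpace ℝ E x, DFunLike.ext _ _ fun φ => DFunLike.congr_fun hx φ⟩
  simpa [hclosed.closure_eq] using
    isCompact_closure_of_isBounded ℝ E (toWeakSpace ℝ E '' closedBall 0 r)
      (by rw [(toWeakSpace ℝ E).injective.preimage_image]; exact isBounded_closedBall)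
      (by simp [hsurj.range_eq])

theorem sigmaCompactSpace_weakSpace
    (hrefl : Function.Surjective (inclusionInDoubleDual ℝ E)) :
    SigmaCompactSpace (WeakSpace ℝ E) :=
  ⟨⟨fun n => toWeakSpace ℝ E '' closedBall 0 n,
    fun n => isCompact_toWeakSpace_closedBall hrefl n,
    iUnion_eq_univ_iff.2 fun x => ⟨⌈‖(toWeakSpace ℝ E).symm x‖⌉₊, _,
      mem_closedBall_zero_iff.2 (Nat.le_ceil _), (toWeakSpace ℝ E).apply_symm_apply x⟩⟩⟩

theorem metrizableSpace_of_isCompact_weakSpace [SeparableSpace (StrongDual ℝ E)]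
    {K : Set (WeakSpace ℝ E)} (hK : IsCompact K) : MetrizableSpace K :=
  have := WeakDual.metrizable_of_isCompact ℝ (StrongDual ℝ E) _
    (hK.image (inclusionInDoubleDualWeak ℝ E).continuous)
  ((isEmbedding_inclusionInDoubleDualWeak ℝ E).restrict (mapsTo_image _ K)).metrizableSpace

theorem separableSpace_strongDual_of_surjective
    (hrefl : Function.Surjective (inclusionInDoubleDual ℝ E)) [SeparableSpace E] :
    SeparableSpace (StrongDual ℝ E) :=
  have := hrefl.denseRange.separableSpace (inclusionInDoubleDual ℝ E).continuous
  separableSpace_of_separableSpace_strongDual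

theorem exists_countable_isKNetwork_weakSpace
    (hrefl : Function.Surjective (inclusionInDoubleDual ℝ E)) [SeparableSpace E] :
    ∃ N : Set (Set (WeakSpace ℝ E)), N.Countable ∧ IsKNetwork N := by
  have := separableSpace_strongDual_of_surjective hrefl
  have hball (n : ℕ) := isCompact_toWeakSpace_closedBall hrefl n
  have (n : ℕ) : SecondCountableTopology (toWeakSpace ℝ E '' closedBall 0 n) :=
    have := isCompact_iff_compactSpace.1 (hball n)
    have := metrizableSpace_of_isCompact_weakSpace (hball n)
    inferInstance
  refine exists_countable_isKNetwork_of_isCompact_subset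
    (fun n : ℕ => toWeakSpace ℝ E '' closedBall 0 n) fun K hK => ?_
  obtain ⟨r, hr⟩ := (isBounded_preimage_toWeakSpace hK).subset_closedBall 0
  exact ⟨⌈r⌉₊, fun x hx => ⟨_, closedBall_subset_closedBall (Nat.le_ceil r)
    (hr (by simpa using hx)), (toWeakSpace ℝ E).apply_symm_apply x⟩⟩

end Banach

theorem reflexive_banach_weakAleph_iff_weakAleph0_iff_separable_general
    (E : Type) [NormedAddCommGroup E] [NormedSpace ℝ E]
    (hrefl : Function.Surjective (NormedSpace.inclusionInDoubleDual ℝ E)) :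
    (IsAlephSpace (WeakSpace ℝ E) ↔ IsAleph0Space (WeakSpace ℝ E)) ∧
    (IsAleph0Space (WeakSpace ℝ E) ↔ TopologicalSpace.SeparableSpace E) := by
  have := sigmaCompactSpace_weakSpace hrefl
  refine ⟨isAlephSpace_iff_isAleph0Space, fun ⟨_, _, N, hNc, hNk⟩ => ?_, fun _ => ?_⟩
  · have := hNk.isNetwork.separableSpace hNc
    exact separableSpace_of_separableSpace_weakSpace
  · obtain ⟨N, hNc, hNk⟩ := exists_countable_isKNetwork_weakSpace hrefl
    exact ⟨inferInstance, inferInstance, N, hNc, hNk⟩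

/-- A reflexive real Banach space is a weakly ℵ-space iff it is a weakly ℵ₀-space iff
it is separable. -/
theorem reflexive_banach_weakAleph_iff_weakAleph0_iff_separable
    (E : Type) [NormedAddCommGroup E] [NormedSpace ℝ E] [CompleteSpace E]
    (hrefl : Function.Surjective (NormedSpace.inclusionInDoubleDual ℝ E)) :
    (IsAlephSpace (WeakSpace ℝ E) ↔ IsAleph0Space (WeakSpace ℝ E)) ∧
    (IsAleph0Space (WeakSpace ℝ E) ↔ TopologicalSpace.SeparableSpace E) :=
  reflexive_banach_weakAleph_iff_weakAleph0_iff_separable_general E hrefl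
end
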